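/- arXiv:1605.07759 — 2 statements merged into one kernel-verified Lean document; each statement's English description precedes it below -/
import Mathlib

section
/- Let D ⊆ ℂ be open and let f : D → ℂ be holomorphic with f′(z) ≠ 0 for every z ∈ D, and let U(z) = log(|f′(z)| / (1 + |f(z)|²)). Then for all z ∈ D, ∂_z² U(z) − (∂_z U(z))² = ½ ( f′′′(z)/f′(z) − (3/2)(f′′(z)/f′(z))² ); that is, the W-invariant of the local solution U equals one half of the Schwarzian derivative of f. -/
/-!
With `σ = 1 + f f̄` we have `U = ½ log (f' f̄') − log σ` on `D`, and `∂_z f̄ = 0`,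
so `∂_z U = S/2 − A` where `S = f''/f'` and `A = f' f̄ / σ = ∂_z log σ`.
Differentiating again, `∂_z A = f'' f̄ / σ − A² = S A − A²`, so every term containing
`A` cancels in `∂_z² U − (∂_z U)²`, leaving `S'/2 − S²/4`, half the Schwarzian
`S' − S²/2`.
-/

open Complex Filter

/-- The Wirtinger derivative `∂_z = ½(∂/∂x₁ − i ∂/∂x₂)` on `ℂ ≃ ℝ²`, `z = x₁ + i x₂`. -/
noncomputable def wz (f : ℂ → ℂ) (z : ℂ) : ℂ :=
  (fderiv ℝ f z 1 - Complex.I * fderiv ℝ f z Complex.I) / 2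

open ComplexConjugate Topology

section Wirtinger

variable {g h φ : ℂ → ℂ} {z : ℂ}

theorem fderiv_real_apply_eq_mul_deriv (hφ : DifferentiableAt ℂ φ z) (v : ℂ) :
    fderiv ℝ φ z v = v * deriv φ z := by
  rw [hφ.fderiv_restrictScalars ℝ, ContinuousLinearMap.coe_restrictScalars',
    fderiv_eq_smul_deriv, smul_eq_mul]

theorem Filter.EventuallyEq.wz_eq (hgh : g =ᶠ[𝓝 z] h) : wz g z = wz h z := by
  rw [wz, wz, hgh.fderiv_eq]

theorem wz_eq_deriv (hg : DifferentiableAt ℂ g z) : wz g z = deriv g z := by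
  rw [wz, fderiv_real_apply_eq_mul_deriv hg, fderiv_real_apply_eq_mul_deriv hg]
  linear_combination (-deriv g z / 2) * I_sq

theorem wz_comp (hφ : DifferentiableAt ℂ φ (g z)) (hg : DifferentiableAt ℝ g z) :
    wz (fun w => φ (g w)) z = deriv φ (g z) * wz g z := by
  rw [wz, wz, fderiv_fun_comp z (hφ.restrictScalars ℝ) hg]
  simp only [ContinuousLinearMap.comp_apply, fderiv_real_apply_eq_mul_deriv hφ]
  ring

theorem wz_conj_eq_zero (hg : DifferentiableAt ℂ g z) : wz (fun w => conj (g w)) z = 0 := by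
  have := fderiv_star (𝕜 := ℝ) (f := g) (x := z)
  simp only [Complex.star_def] at this
  rw [wz, this]
  simp only [ContinuousLinearMap.comp_apply, ContinuousLinearEquiv.coe_coe, starL'_apply,
    Complex.star_def, fderiv_real_apply_eq_mul_deriv hg, map_mul, map_one, conj_I]
  linear_combination (conj (deriv g z) / 2) * I_sq

theorem wz_const_add (c : ℂ) : wz (fun w => c + g w) z = wz g z := by
  rw [wz, wz, fderiv_const_add]

theorem wz_sub (hg : DifferentiableAt ℝ g z) (hh : DifferentiableAt ℝ h z) :
    wz (fun w => g w - h w) z = wz g z - wz h z := by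
  rw [wz, wz, wz, fderiv_fun_sub hg hh]
  simp only [sub_apply]
  ring

theorem wz_mul (hg : DifferentiableAt ℝ g z) (hh : DifferentiableAt ℝ h z) :
    wz (fun w => g w * h w) z = wz g z * h z + g z * wz h z := by
  rw [wz, wz, wz, fderiv_fun_mul hg hh]
  simp only [add_apply, smul_apply, smul_eq_mul]
  ring

theorem wz_inv (hg : DifferentiableAt ℝ g z) (hg0 : g z ≠ 0) :
    wz (fun w => (g w)⁻¹) z = -wz g z / g z ^ 2 := by
  rw [wz_comp (differentiableAt_inv hg0) hg, deriv_inv]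
  ring

theorem wz_div (hg : DifferentiableAt ℝ g z) (hh : DifferentiableAt ℝ h z) (hh0 : h z ≠ 0) :
    wz (fun w => g w / h w) z = (wz g z * h z - g z * wz h z) / h z ^ 2 := by
  simp only [div_eq_mul_inv]
  rw [wz_mul (h := fun w => (h w)⁻¹) hg (hh.inv hh0), wz_inv hh hh0]
  field_simp
  ring

theorem wz_div_const (hg : DifferentiableAt ℝ g z) (c : ℂ) :
    wz (fun w => g w / c) z = wz g z / c := by
  simpa [div_eq_inv_mul] using wz_comp (φ := fun u => u / c) ((differentiableAt_id).div_const c) hg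

theorem wz_log (hg : DifferentiableAt ℝ g z) (hgz : g z ∈ slitPlane) :
    wz (fun w => log (g w)) z = wz g z / g z := by
  rw [wz_comp (differentiableAt_log hgz) hg, (hasDerivAt_log hgz).deriv, inv_mul_eq_div]

theorem DifferentiableAt.real_conj (hg : DifferentiableAt ℂ g z) :
    DifferentiableAt ℝ (fun w => conj (g w)) z :=
  (hg.restrictScalars ℝ).star

theorem DifferentiableAt.real_mul_conj (hg : DifferentiableAt ℂ g z)
    (hh : DifferentiableAt ℂ h z) :
    DifferentiableAt ℝ (fun w => g w * conj (h w)) z :=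
  (hg.restrictScalars ℝ).mul hh.real_conj

theorem DifferentiableAt.real_clog (hg : DifferentiableAt ℝ g z) (hgz : g z ∈ slitPlane) :
    DifferentiableAt ℝ (fun w => Complex.log (g w)) z :=
  ((differentiableAt_log hgz).restrictScalars ℝ).comp z hg

theorem wz_mul_conj (hg : DifferentiableAt ℂ g z) (hh : DifferentiableAt ℂ h z) :
    wz (fun w => g w * conj (h w)) z = deriv g z * conj (h z) := by
  rw [wz_mul (hg.restrictScalars ℝ) hh.real_conj, wz_eq_deriv hg,
    wz_conj_eq_zero hh, mul_zero, add_zero]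

end Wirtinger

section Liouville

variable {f g : ℂ → ℂ} {z : ℂ}

theorem mul_conj_mem_slitPlane {a : ℂ} (ha : a ≠ 0) : a * conj a ∈ slitPlane := by
  rw [mul_conj, ofReal_mem_slitPlane]
  exact normSq_pos.2 ha

theorem one_add_mul_conj_mem_slitPlane (b : ℂ) : 1 + b * conj b ∈ slitPlane := by
  rw [mul_conj, ← ofReal_one, ← ofReal_add, ofReal_mem_slitPlane]
  exact add_pos_of_pos_of_nonneg one_pos (normSq_nonneg b)

theorem one_add_mul_conj_ne_zero (b : ℂ) : 1 + b * conj b ≠ 0 :=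
  slitPlane_ne_zero (one_add_mul_conj_mem_slitPlane b)

theorem wz_log_mul_conj (hg : DifferentiableAt ℂ g z) (hg0 : g z ≠ 0) :
    wz (fun w => log (g w * conj (g w))) z = deriv g z / g z := by
  rw [wz_log (hg.real_mul_conj hg) (mul_conj_mem_slitPlane hg0), wz_mul_conj hg hg,
    mul_div_mul_right _ _ ((map_ne_zero _).2 hg0)]

theorem wz_log_one_add_mul_conj (hg : DifferentiableAt ℂ g z) :
    wz (fun w => log (1 + g w * conj (g w))) z =
      deriv g z * conj (g z) / (1 + g z * conj (g z)) := by
  rw [wz_log ((hg.real_mul_conj hg).const_add 1) (one_add_mul_conj_mem_slitPlane _),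
    wz_const_add, wz_mul_conj hg hg]

theorem wz_deriv_mul_conj_div_one_add_mul_conj (hg : DifferentiableAt ℂ g z)
    (hg' : DifferentiableAt ℂ (deriv g) z) :
    wz (fun w => deriv g w * conj (g w) / (1 + g w * conj (g w))) z =
      deriv (deriv g) z * conj (g z) / (1 + g z * conj (g z))
        - (deriv g z * conj (g z) / (1 + g z * conj (g z))) ^ 2 := by
  rw [wz_div (hg'.real_mul_conj hg) ((hg.real_mul_conj hg).const_add 1)
    (one_add_mul_conj_ne_zero _), wz_mul_conj hg' hg, wz_const_add, wz_mul_conj hg hg]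
  field_simp [one_add_mul_conj_ne_zero (g z)]

noncomputable def liouvillePotential (f : ℂ → ℂ) (z : ℂ) : ℂ :=
  log (deriv f z * conj (deriv f z)) / 2 - log (1 + f z * conj (f z))

theorem liouvillePotential_eq (hf' : deriv f z ≠ 0) :
    liouvillePotential f z = Real.log (‖deriv f z‖ / (1 + ‖f z‖ ^ 2)) := by
  have hσ : (0 : ℝ) ≤ 1 + normSq (f z) := add_nonneg zero_le_one (normSq_nonneg _)
  rw [Real.log_div (norm_ne_zero_iff.2 hf') (by positivity), norm_def,
    Real.log_sqrt (normSq_nonneg _), Complex.sq_norm, ofReal_sub, ofReal_div,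
    ofReal_log (normSq_nonneg _), ofReal_log hσ, liouvillePotential, mul_conj, mul_conj]
  push_cast
  rfl

theorem wz_liouvillePotential (hf : DifferentiableAt ℂ f z)
    (hf' : DifferentiableAt ℂ (deriv f) z) (hf'0 : deriv f z ≠ 0) :
    wz (liouvillePotential f) z =
      deriv (deriv f) z / deriv f z / 2 - deriv f z * conj (f z) / (1 + f z * conj (f z)) := by
  have hlog_deriv := (hf'.real_mul_conj hf').real_clog (mul_conj_mem_slitPlane hf'0)
  have hlog_σ :=
    ((hf.real_mul_conj hf).const_add 1).real_clog (one_add_mul_conj_mem_slitPlane (f z))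
  have hhalf_log_deriv : DifferentiableAt ℝ
      (fun w => log (deriv f w * conj (deriv f w)) / 2) z := by
    simpa only [div_eq_mul_inv] using hlog_deriv.mul_const (2⁻¹ : ℂ)
  unfold liouvillePotential
  rw [wz_sub hhalf_log_deriv hlog_σ, wz_div_const hlog_deriv,
    wz_log_mul_conj hf' hf'0, wz_log_one_add_mul_conj hf]

end Liouville

/-- For the local solution `U(z) = log(|f′(z)|/(1+|f(z)|²))` of the
Liouville equation attached to a holomorphic `f` with nowhere vanishing derivative,
the W-invariant `∂_z² U − (∂_z U)²` equals one half of the Schwarzian derivative of `f`. -/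
theorem liouville_w_invariant_eq_half_schwarzian (D : Set ℂ) (hD : IsOpen D) (f : ℂ → ℂ)
    (hf : DifferentiableOn ℂ f D) (hf' : ∀ z ∈ D, deriv f z ≠ 0)
    (U : ℂ → ℝ)
    (hU : ∀ z ∈ D, U z = Real.log (‖deriv f z‖ / (1 + ‖f z‖ ^ 2))) :
    ∀ z ∈ D,
      wz (wz (fun w => (U w : ℂ))) z - (wz (fun w => (U w : ℂ)) z) ^ 2 =
        (1 / 2) * (deriv (deriv (deriv f)) z / deriv f z
          - (3 / 2) * (deriv (deriv f) z / deriv f z) ^ 2) := by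
  have hdiff : ∀ w ∈ D, DifferentiableAt ℂ f w ∧ DifferentiableAt ℂ (deriv f) w ∧
      DifferentiableAt ℂ (deriv (deriv f)) w := fun w hw =>
    have hfa := hf.analyticOnNhd hD w hw
    ⟨hfa.differentiableAt, hfa.deriv.differentiableAt, hfa.deriv.deriv.differentiableAt⟩
  have hwzU : ∀ w ∈ D, wz (fun x => (U x : ℂ)) w = deriv (deriv f) w / deriv f w / 2
      - deriv f w * conj (f w) / (1 + f w * conj (f w)) := by
    intro w hw
    have hUw : (fun x => (U x : ℂ)) =ᶠ[𝓝 w] liouvillePotential f := by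
      filter_upwards [hD.mem_nhds hw] with x hx
      rw [hU x hx, liouvillePotential_eq (hf' x hx)]
    rw [hUw.wz_eq, wz_liouvillePotential (hdiff w hw).1 (hdiff w hw).2.1 (hf' w hw)]
  intro z hz
  obtain ⟨hf₀, hf₁, hf₂⟩ := hdiff z hz
  have hS : DifferentiableAt ℂ (fun w => deriv (deriv f) w / deriv f w) z :=
    hf₂.div hf₁ (hf' z hz)
  have hA : DifferentiableAt ℝ (fun w => deriv f w * conj (f w) / (1 + f w * conj (f w))) z := by
    simpa only [div_eq_mul_inv] using (hf₁.real_mul_conj hf₀).fun_mul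
      (((hf₀.real_mul_conj hf₀).const_add 1).fun_inv (one_add_mul_conj_ne_zero _))
  rw [(eventuallyEq_of_mem (hD.mem_nhds hz) hwzU).wz_eq, hwzU z hz,
    wz_sub ((hS.div_const 2).restrictScalars ℝ) hA, wz_div_const (hS.restrictScalars ℝ),
    wz_eq_deriv hS, (hf₂.hasDerivAt.fun_div hf₁.hasDerivAt (hf' z hz)).deriv,
    wz_deriv_mul_conj_div_one_add_mul_conj hf₀ hf₁]
  have hσ := one_add_mul_conj_ne_zero (f z)
  generalize 1 + f z * conj (f z) = σ at hσ ⊢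
  field_simp [hf' z hz]
  ring
end

section
/- Let γ > −1, μ = γ + 1, λ > 0 and c ∈ ℂ. Define u : ℂ∖ℝ_{≤0} → ℝ by u(z) = 2γ log|z| − 2 log( λ² + λ^{−2} | z^{μ}/μ + c |² ), using the principal power z^{μ}. Then u is smooth and satisfies Δu(z) + 8 exp(u(z)) = 0 for every z ∈ ℂ∖ℝ_{≤0}. -/
/-!
Write `u = 2γ log|z| - 2 log Φ` with `Φ = a + b |F|²`, `a = λ²`, `b = λ⁻²`, `F(z) = z^μ/μ + c`,
so that `F' = z^γ`. The first term is harmonic, being `log` of the modulus of a holomorphic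
function without zeros. For the second, `∂_v log Φ = 2b ⟪F, v F'⟫ / Φ`; differentiating once more
and summing over `v = 1, i`, the terms with `F''` cancel (`i² = -1`) and
`⟪F, F'⟫² + ⟪F, i F'⟫² = |F|² |F'|²`, leaving `Δ log Φ = 4ab |F'|² / Φ²`. Since `ab = 1`,
`Δu = -8 |z^γ|² / Φ² = -8 e^u`.
-/

open Complex Filter

/-- The Laplacian `Δ = ∂²/∂x₁² + ∂²/∂x₂²` of a real-valued function on `ℂ ≃ ℝ²`,
where `z = x₁ + i x₂`. -/
noncomputable def lap (U : ℂ → ℝ) (z : ℂ) : ℝ :=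
  fderiv ℝ (fun w => fderiv ℝ U w 1) z 1 +
    fderiv ℝ (fun w => fderiv ℝ U w Complex.I) z Complex.I

open Topology InnerProductSpace Laplacian

theorem lap_eq_laplacian {f : ℂ → ℝ} {z : ℂ} (hf : ContDiffAt ℝ 2 f z) : lap f z = Δ f z := by
  have hd : DifferentiableAt ℝ (fderiv ℝ f) z :=
    (hf.fderiv_right (m := 1) (by norm_num)).differentiableAt one_ne_zero
  have hsecond (v : ℂ) :
      fderiv ℝ (fun w => fderiv ℝ f w v) z v = fderiv ℝ (fderiv ℝ f) z v v := by
    rw [fderiv_clm_apply hd (differentiableAt_const v)]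
    simp
  simp [lap, laplacian_eq_iteratedFDeriv_complexPlane, iteratedFDeriv_two_apply, hsecond]

theorem lap_const_mul_sub_const_mul {f g : ℂ → ℝ} {z : ℂ} (hf : ContDiffAt ℝ 2 f z)
    (hg : ContDiffAt ℝ 2 g z) (α β : ℝ) :
    lap (fun w => α * f w - β * g w) z = α * lap f z - β * lap g z := by
  have hlin : (fun w => α * f w - β * g w) = α • f - β • g := rfl
  have hαf : ContDiffAt ℝ 2 (α • f) z := hf.const_smul α
  have hβg : ContDiffAt ℝ 2 (β • g) z := hg.const_smul β
  rw [hlin, lap_eq_laplacian (f := α • f - β • g) (hαf.sub hβg), lap_eq_laplacian hf,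
    lap_eq_laplacian hg, hαf.laplacian_sub hβg, laplacian_smul α hf, laplacian_smul β hg,
    smul_eq_mul, smul_eq_mul]

theorem lap_log_norm {z : ℂ} (hz : z ≠ 0) : lap (fun w => Real.log ‖w‖) z = 0 := by
  have hharm : HarmonicAt (fun w : ℂ => Real.log ‖w‖) z := analyticAt_id.harmonicAt_log_norm hz
  rw [lap_eq_laplacian hharm.1]
  exact hharm.2.self_of_nhds

theorem Complex.inner_sq_add_inner_I_mul_sq (x y : ℂ) :
    ⟪x, y⟫_ℝ ^ 2 + ⟪x, I * y⟫_ℝ ^ 2 = ‖x‖ ^ 2 * ‖y‖ ^ 2 := by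
  simp only [Complex.inner, ← Complex.normSq_eq_norm_sq, Complex.normSq_apply, mul_re, mul_im,
    conj_re, conj_im, I_re, I_im]
  ring

section LogAddMulSqNorm

variable {F G : ℂ → ℂ} {a b : ℝ} {z : ℂ}

theorem AnalyticAt.contDiffAt_log_add_mul_sq_norm {n : WithTop ℕ∞} (hF : AnalyticAt ℂ F z)
    (hΦ : 0 < a + b * ‖F z‖ ^ 2) :
    ContDiffAt ℝ n (fun w => Real.log (a + b * ‖F w‖ ^ 2)) z :=
  (contDiffAt_const.add (contDiffAt_const.mul
    (((hF.contDiffAt (n := n)).restrict_scalars ℝ).norm_sq ℝ))).log hΦ.ne'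

theorem HasDerivAt.fderiv_log_add_mul_sq_norm {F' : ℂ} (hF : HasDerivAt F F' z)
    (hΦ : 0 < a + b * ‖F z‖ ^ 2) (v : ℂ) :
    fderiv ℝ (fun w => Real.log (a + b * ‖F w‖ ^ 2)) z v =
      2 * b * ⟪F z, v * F'⟫_ℝ / (a + b * ‖F z‖ ^ 2) := by
  rw [(((hF.hasFDerivAt.restrictScalars ℝ).norm_sq.const_mul b).const_add a |>.log hΦ.ne').fderiv]
  simp
  ring

theorem HasDerivAt.fderiv_inner_mul_div_add_mul_sq_norm {G' : ℂ} (hF : HasDerivAt F (G z) z)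
    (hG : HasDerivAt G G' z) (hΦ : 0 < a + b * ‖F z‖ ^ 2) (v : ℂ) :
    fderiv ℝ (fun w => 2 * b * ⟪F w, v * G w⟫_ℝ / (a + b * ‖F w‖ ^ 2)) z v =
      2 * b * (‖v * G z‖ ^ 2 + ⟪F z, v * (v * G')⟫_ℝ) / (a + b * ‖F z‖ ^ 2)
        - (2 * b * ⟪F z, v * G z⟫_ℝ) ^ 2 / (a + b * ‖F z‖ ^ 2) ^ 2 := by
  have hF' := hF.hasFDerivAt.restrictScalars ℝ
  have hnum := (hF'.inner ℝ ((hG.const_mul v).hasFDerivAt.restrictScalars ℝ)).const_mul (2 * b)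
  have hinv : HasFDerivAt (fun w => (a + b * ‖F w‖ ^ 2)⁻¹) _ z :=
    (hasDerivAt_inv hΦ.ne').comp_hasFDerivAt z ((hF'.norm_sq.const_mul b).const_add a)
  have hquot : HasFDerivAt
      (fun w => 2 * b * ⟪F w, v * G w⟫_ℝ * (a + b * ‖F w‖ ^ 2)⁻¹) _ z := hnum.mul hinv
  simp only [div_eq_mul_inv]
  rw [hquot.fderiv]
  simp [fderivInnerCLM_apply]
  field_simp
  ring

theorem AnalyticAt.lap_log_add_mul_sq_norm (hF : AnalyticAt ℂ F z)
    (hΦ : 0 < a + b * ‖F z‖ ^ 2) :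
    lap (fun w => Real.log (a + b * ‖F w‖ ^ 2)) z =
      4 * a * b * ‖deriv F z‖ ^ 2 / (a + b * ‖F z‖ ^ 2) ^ 2 := by
  have hnear : ∀ᶠ w in 𝓝 z, AnalyticAt ℂ F w ∧ 0 < a + b * ‖F w‖ ^ 2 :=
    hF.eventually_analyticAt.and <| (hF.continuousAt.norm.pow 2 |>.const_mul b |>.const_add a)
      |>.eventually (lt_mem_nhds hΦ)
  have hsecond (v : ℂ) :
      fderiv ℝ (fun w => fderiv ℝ (fun w => Real.log (a + b * ‖F w‖ ^ 2)) w v) z v =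
      2 * b * (‖v * deriv F z‖ ^ 2 + ⟪F z, v * (v * deriv (deriv F) z)⟫_ℝ) / (a + b * ‖F z‖ ^ 2)
        - (2 * b * ⟪F z, v * deriv F z⟫_ℝ) ^ 2 / (a + b * ‖F z‖ ^ 2) ^ 2 := by
    have hfirst : (fun w => fderiv ℝ (fun w => Real.log (a + b * ‖F w‖ ^ 2)) w v) =ᶠ[𝓝 z]
        fun w => 2 * b * ⟪F w, v * deriv F w⟫_ℝ / (a + b * ‖F w‖ ^ 2) :=
      hnear.mono fun w ⟨hFw, hΦw⟩ =>
        hFw.differentiableAt.hasDerivAt.fderiv_log_add_mul_sq_norm hΦw v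
    rw [hfirst.fderiv_eq]
    exact hF.differentiableAt.hasDerivAt.fderiv_inner_mul_div_add_mul_sq_norm
      hF.deriv.differentiableAt.hasDerivAt hΦ v
  have hcross := Complex.inner_sq_add_inner_I_mul_sq (F z) (deriv F z)
  have hΦ' : a + b * ‖F z‖ ^ 2 ≠ 0 := hΦ.ne'
  rw [lap, hsecond, hsecond]
  simp only [one_mul, ← mul_assoc, I_mul_I, neg_one_mul, inner_neg_right, norm_mul, norm_I]
  field_simp
  linear_combination (-4 * b ^ 2) * hcross

end LogAddMulSqNorm

theorem hasDerivAt_cpow_div_add {μ : ℂ} (hμ : μ ≠ 0) (c : ℂ) {z : ℂ} (hz : z ∈ slitPlane) :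
    HasDerivAt (fun w => w ^ μ / μ + c) (z ^ (μ - 1)) z := by
  simpa [mul_div_cancel_left₀ _ hμ] using
    ((hasStrictDerivAt_cpow_const (c := μ) hz).hasDerivAt.div_const μ).add_const c

theorem analyticAt_cpow_div_add (μ c : ℂ) {z : ℂ} (hz : z ∈ slitPlane) :
    AnalyticAt ℂ (fun w => w ^ μ / μ + c) z :=
  ((analyticAt_id.cpow analyticAt_const hz).div_const).add analyticAt_const

theorem Real.exp_two_mul_mul_log_sub_two_mul_log {x y : ℝ} (hx : 0 < x) (hy : 0 < y) (γ : ℝ) :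
    Real.exp (2 * γ * Real.log x - 2 * Real.log y) = (x ^ γ / y) ^ 2 := by
  rw [Real.rpow_def_of_pos hx, ← Real.exp_log hy, ← Real.exp_sub, ← Real.exp_nat_mul,
    Real.log_exp]
  ring_nf

theorem contDiffAt_log_norm {n : WithTop ℕ∞} {z : ℂ} (hz : z ≠ 0) :
    ContDiffAt ℝ n (fun w : ℂ => Real.log ‖w‖) z :=
  (contDiffAt_norm ℝ hz).log (norm_ne_zero_iff.2 hz)

/-- For `γ > −1`, `μ = γ + 1`, `λ > 0`, `c ∈ ℂ`, the function
`u(z) = 2γ log|z| − 2 log(λ² + λ^{−2} |z^μ/μ + c|²)` (principal power `z^μ`) is smooth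
on `ℂ∖ℝ_{≤0}` and satisfies `Δu + 8 e^u = 0` there. -/
theorem liouville_explicit_solution (γ : ℝ) (hγ : -1 < γ) (μ : ℝ) (hμ : μ = γ + 1)
    (lam : ℝ) (hlam : 0 < lam) (c : ℂ) (u : ℂ → ℝ)
    (hu : ∀ z : ℂ, u z = 2 * γ * Real.log ‖z‖ -
      2 * Real.log (lam ^ 2 + lam⁻¹ ^ 2 * ‖z ^ ((μ : ℝ) : ℂ) / (μ : ℂ) + c‖ ^ 2)) :
    ContDiffOn ℝ (⊤ : ℕ∞) u Complex.slitPlane ∧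
      ∀ z ∈ Complex.slitPlane, lap u z + 8 * Real.exp (u z) = 0 := by
  set F : ℂ → ℂ := fun w => w ^ (μ : ℂ) / μ + c
  set Φ : ℂ → ℝ := fun w => lam ^ 2 + lam⁻¹ ^ 2 * ‖F w‖ ^ 2
  have hΦ (w : ℂ) : 0 < Φ w := by positivity
  have hF {z : ℂ} (hz : z ∈ slitPlane) : AnalyticAt ℂ F z := analyticAt_cpow_div_add _ c hz
  have hu' : u = fun w => 2 * γ * Real.log ‖w‖ - 2 * Real.log (Φ w) := funext hu
  have hsmooth {n : WithTop ℕ∞} {z : ℂ} (hz : z ∈ slitPlane) : ContDiffAt ℝ n u z := by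
    rw [hu']
    exact (contDiffAt_const.mul (contDiffAt_log_norm (slitPlane_ne_zero hz))).sub
      (contDiffAt_const.mul ((hF hz).contDiffAt_log_add_mul_sq_norm (hΦ z)))
  refine ⟨fun z hz => (hsmooth hz).contDiffWithinAt, fun z hz => ?_⟩
  have hz0 : z ≠ 0 := slitPlane_ne_zero hz
  have hderiv : deriv F z = z ^ (γ : ℂ) := by
    have hμ0 : (μ : ℂ) ≠ 0 := ofReal_ne_zero.2 (by linarith)
    rw [(hasDerivAt_cpow_div_add hμ0 c hz).deriv, hμ]
    push_cast
    ring_nf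
  rw [hu', lap_const_mul_sub_const_mul (contDiffAt_log_norm hz0)
      ((hF hz).contDiffAt_log_add_mul_sq_norm (hΦ z)),
    lap_log_norm hz0, (hF hz).lap_log_add_mul_sq_norm (hΦ z), hderiv, norm_cpow_real]
  beta_reduce
  rw [Real.exp_two_mul_mul_log_sub_two_mul_log (norm_pos_iff.2 hz0) (hΦ z)]
  have hΦz : Φ z ≠ 0 := (hΦ z).ne'
  simp only [Φ, F] at hΦz ⊢
  field_simp
  ring
end
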